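/- Let ω, c > 0 and let E₀ : ℝ³ → ℂ³ be a bounded smooth vector field. Then the following are equivalent: (i) there exists χ : ℝ² → ℂ such that E₀(x − (a₁, a₂, 0)) = χ(a₁,a₂)·E₀(x) for all x ∈ ℝ³ and (a₁,a₂) ∈ ℝ², and E₀ satisfies ΔE₀ = −(ω/c)² E₀ componentwise and div E₀ = 0; (ii) there exist k ∈ ℝ³ with |k| = ω/c and n₊, n₋ ∈ ℂ³ with k · n₊ = 0 and k̃ · n₋ = 0, where k̃ = (k₁, k₂, −k₃), such that E₀(x) = n₊ e^{i k·x} + n₋ e^{i k̃·x} for all x ∈ ℝ³. (The solutions of the design equations for the two-dimensional translation group perpendicular to e₃ are exactly the plane-wave pairs with mirror-image wavevectors.) -/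

import Mathlib

noncomputable section

open Real MeasureTheory

abbrev V3 : Type := Fin 3 → ℝ
abbrev C3 : Type := Fin 3 → ℂ

/-- Partial derivative of a scalar field in the `i`-th coordinate direction. -/
def pd (i : Fin 3) (f : V3 → ℂ) (x : V3) : ℂ := fderiv ℝ f x (Pi.single i 1)

/-- Componentwise Laplacian of a scalar field. -/
def lap (f : V3 → ℂ) (x : V3) : ℂ := ∑ i, pd i (pd i f) x

def ph (k : V3) (x : V3) : ℂ := Complex.exp (Complex.I * ((∑ j, k j * x j : ℝ) : ℂ))

def dotCLM (k : V3) : V3 →L[ℝ] ℝ := ∑ j, k j • ContinuousLinearMap.proj j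
lemma dotCLM_apply (k v : V3) : dotCLM k v = ∑ j, k j * v j := by simp [dotCLM]
lemma dotCLM_single (k : V3) (i : Fin 3) : dotCLM k (Pi.single i 1) = k i := by
  simp [dotCLM_apply, Pi.single_apply]
def phD (k : V3) : V3 →L[ℝ] ℂ := Complex.I • (Complex.ofRealCLM.comp (dotCLM k))
lemma phD_apply (k v : V3) : phD k v = Complex.I * ((∑ j, k j * v j : ℝ) : ℂ) := by
  simp [phD, dotCLM_apply]
lemma hasFDerivAt_ph (k : V3) (x : V3) : HasFDerivAt (ph k) (ph k x • phD k) x := by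
  have hv : HasFDerivAt (fun y => (phD k) y) (phD k) x := (phD k).hasFDerivAt
  have h := hv.cexp
  have he : (fun y => Complex.exp (phD k y)) = ph k := by
    funext y; rw [phD_apply]; rfl
  rw [he] at h
  rwa [show Complex.exp (phD k x) = ph k x by rw [phD_apply]; rfl] at h
def proj2C : V3 →L[ℝ] ℂ := Complex.ofRealCLM.comp (ContinuousLinearMap.proj 2)
def termD (k : V3) (cc d : ℂ) : V3 →L[ℝ] ℂ := cc • phD k + d • proj2C

lemma hasFDerivAt_term (k : V3) (g g' : ℝ → ℂ) (x : V3)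
    (hg : HasDerivAt g (g' (x 2)) (x 2)) :
    HasFDerivAt (fun y => ph k y * g (y 2))
      (termD k (ph k x * g (x 2)) (ph k x * g' (x 2))) x := by
  have hproj : HasFDerivAt (fun y : V3 => y 2) (ContinuousLinearMap.proj 2 : V3 →L[ℝ] ℝ) x :=
    (ContinuousLinearMap.proj 2 : V3 →L[ℝ] ℝ).hasFDerivAt
  have h2 : HasFDerivAt (fun y : V3 => g (y 2)) (g' (x 2) • proj2C) x := by
    have := hg.hasFDerivAt.comp x hproj
    refine this.congr_fderiv (Eq.symm ?_)
    ext v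
    simp [proj2C]
    ring
  have h := (hasFDerivAt_ph k x).mul h2
  refine h.congr_fderiv (Eq.symm ?_)
  ext v
  simp [termD, proj2C, phD_apply]
  ring

lemma termD_single (k : V3) (cc d : ℂ) (i : Fin 3) :
    termD k cc d (Pi.single i 1) =
      cc * (Complex.I * k i) + d * (if i = 2 then 1 else 0) := by
  have h1 : ((∑ j, k j * (Pi.single i 1 : V3) j : ℝ) : ℂ) = (k i : ℂ) := by
    norm_cast
    simp [Pi.single_apply]
  simp [termD, phD_apply, proj2C, h1, Pi.single_apply, eq_comm]
  split <;> simp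

lemma pd_of_hasFDerivAt {f : V3 → ℂ} {L : V3 →L[ℝ] ℂ} {x : V3} (h : HasFDerivAt f L x)
    (i : Fin 3) : pd i f x = L (Pi.single i 1) := by rw [pd, h.fderiv]

lemma pd_term (k : V3) (g g' : ℝ → ℂ) (hg : ∀ t, HasDerivAt g (g' t) t) (i : Fin 3) (x : V3) :
    pd i (fun y => ph k y * g (y 2)) x =
      ph k x * g (x 2) * (Complex.I * k i) +
      ph k x * g' (x 2) * (if i = 2 then 1 else 0) := by
  rw [pd_of_hasFDerivAt (hasFDerivAt_term k g g' x (hg (x 2))) i, termD_single]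

lemma pd_term2 (k k' : V3) (g g' h h' : ℝ → ℂ) (hg : ∀ t, HasDerivAt g (g' t) t)
    (hh : ∀ t, HasDerivAt h (h' t) t) (i : Fin 3) (x : V3) :
    pd i (fun y => ph k y * g (y 2) + ph k' y * h (y 2)) x =
      (ph k x * g (x 2) * (Complex.I * k i) +
        ph k x * g' (x 2) * (if i = 2 then 1 else 0)) +
      (ph k' x * h (x 2) * (Complex.I * k' i) +
        ph k' x * h' (x 2) * (if i = 2 then 1 else 0)) := by
  have hF := (hasFDerivAt_term k g g' x (hg (x 2))).add (hasFDerivAt_term k' h h' x (hh (x 2)))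
  rw [pd_of_hasFDerivAt (f := fun y => ph k y * g (y 2) + ph k' y * h (y 2)) hF i]
  simp [termD_single]

lemma pd_const2 (k k' : V3) (A B : ℂ) (j : Fin 3) (x : V3) :
    pd j (fun y => ph k y * A + ph k' y * B) x
      = ph k x * (A * (Complex.I * k j)) + ph k' x * (B * (Complex.I * k' j)) := by
  have h := pd_term2 k k' (fun _ => A) (fun _ => (0:ℂ)) (fun _ => B) (fun _ => (0:ℂ))
    (fun t => hasDerivAt_const t A) (fun t => hasDerivAt_const t B) j x
  rw [h]
  ring

lemma pd_term_ne2 (k : V3) (g g' : ℝ → ℂ) (hg : ∀ t, HasDerivAt g (g' t) t) (i : Fin 3)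
    (hi : i ≠ 2) (x : V3) :
    pd i (fun y => ph k y * g (y 2)) x = ph k x * g (x 2) * (Complex.I * k i) := by
  rw [pd_term k g g' hg i x, if_neg hi]
  ring

lemma pd_term_2 (k : V3) (g g' : ℝ → ℂ) (hg : ∀ t, HasDerivAt g (g' t) t) (x : V3) :
    pd 2 (fun y => ph k y * g (y 2)) x =
      ph k x * g (x 2) * (Complex.I * k 2) + ph k x * g' (x 2) := by
  rw [pd_term k g g' hg 2 x, if_pos rfl]
  ring


lemma hasDerivAt_cexp_lin (l : ℂ) (t : ℝ) :
    HasDerivAt (fun s : ℝ => Complex.exp (l * s)) (l * Complex.exp (l * t)) t := by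
  have h0 : HasDerivAt (fun s : ℝ => (s : ℂ)) 1 t := Complex.ofRealCLM.hasDerivAt
  have h1 : HasDerivAt (fun s : ℝ => l * (s : ℂ)) l t := by
    simpa using h0.const_mul l
  simpa [mul_comm] using h1.cexp

/-- Solutions of `f' = l f` are exponentials. -/
lemma expODE (l : ℂ) (f : ℝ → ℂ) (hf : ∀ t, HasDerivAt f (l * f t) t) (t : ℝ) :
    f t = f 0 * Complex.exp (l * t) := by
  have hd : ∀ s, HasDerivAt (fun s => f s * Complex.exp (-(l * s))) 0 s := by
    intro s
    have he : HasDerivAt (fun s : ℝ => Complex.exp (-(l * s))) (-l * Complex.exp (-(l*s))) s := by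
      simpa [neg_mul] using hasDerivAt_cexp_lin (-l) s
    have := (hf s).mul he
    refine this.congr_deriv (Eq.symm ?_)
    ring
  have hc := is_const_of_deriv_eq_zero (fun s => (hd s).differentiableAt)
    (fun s => (hd s).deriv) t 0
  simp only [Complex.ofReal_zero, mul_zero, neg_zero, Complex.exp_zero, mul_one] at hc
  have hprod : Complex.exp (-(l * (t:ℂ))) * Complex.exp (l * t) = 1 := by
    rw [← Complex.exp_add]; simp
  linear_combination Complex.exp (l*(t:ℂ)) * hc - f t * hprod

/-- A differentiable homomorphism `ℝ → ℂ` is an exponential. -/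
lemma hom_exp (f : ℝ → ℂ) (hd : Differentiable ℝ f) (h0 : f 0 = 1)
    (hmul : ∀ s t, f (s + t) = f s * f t) (t : ℝ) :
    f t = Complex.exp (deriv f 0 * t) := by
  have key : ∀ u, HasDerivAt f (deriv f 0 * f u) u := by
    intro u
    have hfu : HasDerivAt f (deriv f u) u := (hd u).hasDerivAt
    have hfu0 : HasDerivAt f (deriv f u) (u + 0) := by simpa using hfu
    have h1 : HasDerivAt (fun s : ℝ => f (u + s)) (deriv f u) 0 :=
      hfu0.comp_const_add u 0
    have h2 : HasDerivAt (fun s : ℝ => f u * f s) (f u * deriv f 0) 0 :=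
      (hd 0).hasDerivAt.const_mul (f u)
    have heq : (fun s : ℝ => f (u + s)) = fun s => f u * f s := funext fun s => hmul u s
    rw [heq] at h1
    have h3 := h1.unique h2
    rw [h3] at hfu
    simpa [mul_comm] using hfu
  have := expODE (deriv f 0) f key t
  rwa [h0, one_mul] at this

/-- boundedness kills the real part of the exponent -/
lemma re_eq_zero_of_bounded (l : ℂ) (M : ℝ)
    (hb : ∀ t : ℝ, ‖Complex.exp (l * t)‖ ≤ M) : l.re = 0 := by
  by_contra hre
  have hM : (1:ℝ) ≤ M := by simpa using hb 0
  have habs : ∀ t : ℝ, Real.exp (l.re * t) ≤ M := by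
    intro t
    have h := hb t
    rwa [Complex.norm_exp, show (l * (t:ℂ)).re = l.re * t by simp [Complex.mul_re]] at h
  have h2 := habs ((Real.log (M + 1)) / l.re)
  rw [mul_div_cancel₀ _ hre, Real.exp_log (by linarith)] at h2
  linarith

/-- second-order ODE `f'' = μ² f`, `μ ≠ 0` -/
lemma ode2 (μ : ℂ) (hμ : μ ≠ 0) (f f' : ℝ → ℂ)
    (h1 : ∀ t, HasDerivAt f (f' t) t) (h2 : ∀ t, HasDerivAt f' (μ^2 * f t) t) :
    ∃ A B : ℂ, ∀ t, f t = A * Complex.exp (μ * t) + B * Complex.exp (-(μ * t)) := by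
  set g : ℝ → ℂ := fun t => f' t - μ * f t with hgdef
  have hg : ∀ t, HasDerivAt g (-μ * g t) t := by
    intro t
    have := (h2 t).sub ((h1 t).const_mul μ)
    refine this.congr_deriv (Eq.symm ?_)
    simp only [hgdef]
    ring
  have hgval : ∀ t, g t = g 0 * Complex.exp (-(μ * t)) := by
    intro t
    have := expODE (-μ) g hg t
    rwa [neg_mul] at this
  have hH : ∀ t, HasDerivAt
      (fun s => f s * Complex.exp (-(μ * s)) + (g 0 / (2*μ)) * Complex.exp (-(2*μ * s))) 0 t := by
    intro t
    have he1 : HasDerivAt (fun s : ℝ => Complex.exp (-(μ * s))) (-μ * Complex.exp (-(μ*t))) t := by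
      simpa [neg_mul] using hasDerivAt_cexp_lin (-μ) t
    have he2 : HasDerivAt (fun s : ℝ => Complex.exp (-(2*μ * s))) (-(2*μ) * Complex.exp (-(2*μ*t))) t := by
      simpa [neg_mul] using hasDerivAt_cexp_lin (-(2*μ)) t
    have := ((h1 t).mul he1).add ((he2.const_mul (g 0 / (2*μ))))
    refine this.congr_deriv (Eq.symm ?_)
    have hgt := hgval t
    simp only [hgdef] at hgt
    have hexp : Complex.exp (-(2*μ*(t:ℂ))) = Complex.exp (-(μ*t)) * Complex.exp (-(μ*t)) := by
      rw [← Complex.exp_add]; ring_nf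
    rw [hexp]
    field_simp
    linear_combination (-Complex.exp (-(μ*↑t))) * hgt
  have hc := is_const_of_deriv_eq_zero (fun s => (hH s).differentiableAt)
    (fun s => (hH s).deriv)
  refine ⟨f 0 + g 0 / (2*μ), -(g 0 / (2*μ)), fun t => ?_⟩
  have h := hc t 0
  simp only [Complex.ofReal_zero, mul_zero, neg_zero, Complex.exp_zero, mul_one] at h
  have he : Complex.exp (-(2*μ*(t:ℂ))) = Complex.exp (-(μ*t)) * Complex.exp (-(μ*t)) := by
    rw [← Complex.exp_add]; ring_nf
  rw [he] at h
  have hprod : Complex.exp (μ * (t:ℂ)) * Complex.exp (-(μ * t)) = 1 := by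
    rw [← Complex.exp_add]; simp
  linear_combination Complex.exp (μ*(t:ℂ)) * h
    - (f t + (g 0/(2*μ)) * Complex.exp (-(μ*(t:ℂ)))) * hprod

/-- a bounded solution of `f'' = 0` is constant -/
lemma ode0 (f f' : ℝ → ℂ) (M : ℝ) (hb : ∀ t, ‖f t‖ ≤ M)
    (h1 : ∀ t, HasDerivAt f (f' t) t) (h2 : ∀ t, HasDerivAt f' 0 t) :
    ∀ t, f t = f 0 := by
  have hf'c : ∀ t, f' t = f' 0 :=
    fun t => is_const_of_deriv_eq_zero (fun s => (h2 s).differentiableAt)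
      (fun s => (h2 s).deriv) t 0
  have hlin : ∀ t, f t = f 0 + f' 0 * t := by
    intro t
    have hF : ∀ s, HasDerivAt (fun s : ℝ => f s - f' 0 * s) 0 s := by
      intro s
      have hl : HasDerivAt (fun s : ℝ => f' 0 * (s:ℂ)) (f' 0) s := by
        simpa using (Complex.ofRealCLM.hasDerivAt (x := s)).const_mul (f' 0)
      have := (h1 s).sub hl
      refine this.congr_deriv (Eq.symm ?_)
      rw [hf'c s]; ring
    have hcc := is_const_of_deriv_eq_zero (fun s => (hF s).differentiableAt)
      (fun s => (hF s).deriv) t 0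
    simp only [Complex.ofReal_zero, mul_zero, sub_zero] at hcc
    linear_combination hcc
  by_cases hz : f' 0 = 0
  · intro t; rw [hlin t, hz]; ring
  · exfalso
    have hpos : 0 < ‖f' 0‖ := by
      simpa [norm_pos_iff] using hz
    have hM0 : 0 ≤ M := le_trans (norm_nonneg _) (hb 0)
    have hA0 : 0 ≤ ‖f 0‖ := norm_nonneg _
    set t : ℝ := (M + ‖f 0‖ + 1) / ‖f' 0‖ with htdef
    have htpos : 0 ≤ t := div_nonneg (by linarith) hpos.le
    have habs : ‖(f' 0) * (t:ℂ)‖ ≤ M + ‖f 0‖ := by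
      have hbt := hb t
      rw [hlin t] at hbt
      calc ‖(f' 0) * (t:ℂ)‖
          = ‖f 0 + f' 0 * t - f 0‖ := by ring_nf
        _ ≤ ‖f 0 + f' 0 * t‖ + ‖f 0‖ := by
            simpa using norm_sub_le (f 0 + f' 0 * t) (f 0)
        _ ≤ M + ‖f 0‖ := by linarith
    have heq : ‖(f' 0) * (t:ℂ)‖ = M + ‖f 0‖ + 1 := by
      rw [norm_mul, Complex.norm_of_nonneg htpos, htdef]
      field_simp
    linarith [heq ▸ habs]

lemma expcomb_bounded (μ M : ℝ) (hμ : 0 < μ) (A B : ℂ)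
    (hb : ∀ t : ℝ, ‖A * Complex.exp ((μ:ℂ) * t) + B * Complex.exp (-((μ:ℂ) * t))‖ ≤ M) :
    A = 0 := by
  by_contra hA
  have hApos : 0 < ‖A‖ := by simpa [norm_pos_iff] using hA
  have hM0 : 0 ≤ M := le_trans (norm_nonneg _) (by simpa using hb 0)
  have hBpos : 0 ≤ ‖B‖ := norm_nonneg _
  set y : ℝ := (M + ‖B‖ + 1) / ‖A‖ with hy
  have hypos : 0 < y := by positivity
  set t : ℝ := max 0 (Real.log y / μ) with ht
  have ht0 : 0 ≤ t := le_max_left _ _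
  have habs1 : ‖A * Complex.exp ((μ:ℂ) * t)‖ = ‖A‖ * Real.exp (μ * t) := by
    rw [norm_mul, Complex.norm_exp]
    norm_num [Complex.mul_re]
  have habs2 : ‖B * Complex.exp (-((μ:ℂ) * t))‖ ≤ ‖B‖ := by
    rw [norm_mul, Complex.norm_exp]
    have : (-((μ:ℂ) * t)).re = -(μ * t) := by norm_num [Complex.mul_re]
    rw [this]
    have : Real.exp (-(μ * t)) ≤ 1 := Real.exp_le_one_iff.mpr (by nlinarith)
    nlinarith
  have hlow : ‖A‖ * Real.exp (μ * t) ≤ M + ‖B‖ := by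
    have h1 := hb t
    have h2 : ‖A * Complex.exp ((μ:ℂ) * t)‖ ≤
        ‖A * Complex.exp ((μ:ℂ) * t) + B * Complex.exp (-((μ:ℂ) * t))‖
        + ‖B * Complex.exp (-((μ:ℂ) * t))‖ := by
      calc ‖A * Complex.exp ((μ:ℂ) * t)‖
          = ‖(A * Complex.exp ((μ:ℂ) * t) + B * Complex.exp (-((μ:ℂ) * t)))
            - B * Complex.exp (-((μ:ℂ) * t))‖ := by ring_nf
        _ ≤ _ := by
            simpa using norm_sub_le
              (A * Complex.exp ((μ:ℂ) * t) + B * Complex.exp (-((μ:ℂ) * t)))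
              (B * Complex.exp (-((μ:ℂ) * t)))
    rw [habs1] at h2
    linarith
  have hexp : y ≤ Real.exp (μ * t) := by
    have h3 : Real.log y ≤ μ * t := by
      have : Real.log y / μ ≤ t := le_max_right _ _
      calc Real.log y = μ * (Real.log y / μ) := by field_simp
        _ ≤ μ * t := by nlinarith
    calc y = Real.exp (Real.log y) := (Real.exp_log hypos).symm
      _ ≤ Real.exp (μ * t) := Real.exp_le_exp.mpr h3
  have : ‖A‖ * y ≤ M + ‖B‖ := by nlinarith
  rw [hy] at this
  field_simp at this
  linarith


/-- The solutions of the design equations for the two-dimensional translation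
group perpendicular to `e₃` are exactly the plane-wave pairs with mirror-image
wavevectors `k` and `k̃ = (k₁, k₂, −k₃)`. -/
theorem planeWavePairs_solve_design_equations_2D
    (ω c : ℝ) (hω : 0 < ω) (hc : 0 < c) (E : V3 → C3)
    (hbdd : ∃ M : ℝ, ∀ (x : V3) (i : Fin 3), ‖E x i‖ ≤ M)
    (hsmooth : ∀ i : Fin 3, ContDiff ℝ (⊤ : ℕ∞) fun x => E x i) :
    ((∃ χ : ℝ × ℝ → ℂ, ∀ (x : V3) (a : ℝ × ℝ),
        E (x - ![a.1, a.2, 0]) = fun i => χ a * E x i) ∧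
      (∀ (x : V3) (i : Fin 3), lap (fun y => E y i) x = -(((ω/c)^2 : ℝ) : ℂ) * E x i) ∧
      (∀ x : V3, ∑ i, pd i (fun y => E y i) x = 0)) ↔
    (∃ (k : V3) (np nm : C3),
      Real.sqrt (∑ i, k i ^ 2) = ω / c ∧
      (∑ i, (k i : ℂ) * np i) = 0 ∧
      (∑ i, ((![k 0, k 1, -(k 2)] : V3) i : ℂ) * nm i) = 0 ∧
      ∀ x : V3, E x = fun i =>
        np i * Complex.exp (Complex.I * ((∑ j, k j * x j : ℝ) : ℂ)) +
        nm i * Complex.exp (Complex.I * ((∑ j, (![k 0, k 1, -(k 2)] : V3) j * x j : ℝ) : ℂ))) := by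
  constructor
  · -- forward direction
    rintro ⟨⟨χ, hχ⟩, hlap, hdiv⟩
    obtain ⟨M, hM⟩ := hbdd
    have hωc : 0 < ω / c := div_pos hω hc
    by_cases hE0 : ∀ x, E x = 0
    · refine ⟨![ω/c, 0, 0], 0, 0, ?_, by simp, by simp, ?_⟩
      · rw [Fin.sum_univ_three]
        norm_num [Real.sqrt_sq hωc.le, Matrix.cons_val_two]
      · intro x
        rw [hE0 x]
        funext i
        simp
    · push_neg at hE0
      obtain ⟨x₀, hx₀⟩ := hE0
      have hx₀i : ∃ i₀, E x₀ i₀ ≠ 0 := by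
        by_contra hcon
        push_neg at hcon
        exact hx₀ (funext hcon)
      obtain ⟨i₀, hne⟩ := hx₀i
      set v : ℝ × ℝ → V3 := fun a => ![a.1, a.2, 0] with hvdef
      have hχx₀ : ∀ a, χ a * E x₀ i₀ = E (x₀ - v a) i₀ :=
        fun a => (congrFun (hχ x₀ a) i₀).symm
      have hvadd : ∀ a b : ℝ × ℝ, v (a + b) = v a + v b := by
        intro a b
        funext j
        fin_cases j <;> simp [hvdef]
      have hχmul : ∀ a b : ℝ × ℝ, χ (a + b) = χ a * χ b := by
        intro a b
        have h1 : E (x₀ - v (a + b)) i₀ = χ (a+b) * E x₀ i₀ := (hχx₀ (a+b)).symm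
        have heq : x₀ - v (a + b) = (x₀ - v b) - v a := by
          rw [hvadd, sub_sub, add_comm (v a) (v b)]
        have h2 : E ((x₀ - v b) - v a) i₀ = χ a * E (x₀ - v b) i₀ :=
          congrFun (hχ (x₀ - v b) a) i₀
        rw [heq, h2, ← hχx₀ b] at h1
        exact mul_right_cancel₀ hne (by linear_combination -h1)
      have hv0 : v 0 = 0 := by
        funext j
        fin_cases j <;> simp [hvdef]
      have hχ0 : χ 0 = 1 := by
        have h := hχx₀ 0
        rw [hv0, sub_zero] at h
        exact mul_right_cancel₀ hne (by rw [h, one_mul])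
      have hχne : ∀ a, χ a ≠ 0 := by
        intro a
        have : χ a * χ (-a) = 1 := by rw [← hχmul, add_neg_cancel, hχ0]
        exact left_ne_zero_of_mul_eq_one this
      have hχrep : ∀ a, χ a = E (x₀ - v a) i₀ / E x₀ i₀ := by
        intro a
        rw [← hχx₀ a]
        field_simp
      have hχbd : ∀ a, ‖χ a‖ ≤ M / ‖E x₀ i₀‖ := by
        intro a
        rw [hχrep, norm_div]
        have h1 := hM (x₀ - v a) i₀
        have h2 : 0 < ‖E x₀ i₀‖ := by simpa [norm_pos_iff] using hne
        gcongr
      -- the two one-parameter characters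
      set g₁ : ℝ → ℂ := fun t => χ (t, 0) with hg₁def
      set g₂ : ℝ → ℂ := fun t => χ (0, t) with hg₂def
      have hEdiff : ∀ i : Fin 3, Differentiable ℝ (fun x => E x i) :=
        fun i => ((hsmooth i).of_le (by simp)).differentiable (n := 1) one_ne_zero
      have hg₁rep : g₁ = fun t => E (x₀ - ![t, 0, 0]) i₀ / E x₀ i₀ := by
        funext t
        show χ (t, 0) = _
        rw [hχrep]
      have hg₂rep : g₂ = fun t => E (x₀ - ![0, t, 0]) i₀ / E x₀ i₀ := by
        funext t
        show χ (0, t) = _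
        rw [hχrep]
      have hlinediff : ∀ (w : ℝ → V3), (∀ j : Fin 3, Differentiable ℝ (fun t => w t j)) →
          Differentiable ℝ (fun t => E (x₀ - w t) i₀ / E x₀ i₀) := by
        intro w hw
        apply Differentiable.div_const
        exact (hEdiff i₀).comp ((differentiable_const x₀).sub (differentiable_pi.mpr hw))
      have hg₁diff : Differentiable ℝ g₁ := by
        rw [hg₁rep]
        apply hlinediff
        intro j
        fin_cases j
        · exact differentiable_id
        · exact differentiable_const _
        · exact differentiable_const _
      have hg₂diff : Differentiable ℝ g₂ := by
        rw [hg₂rep]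
        apply hlinediff
        intro j
        fin_cases j
        · exact differentiable_const _
        · exact differentiable_id
        · exact differentiable_const _
      have hg₁0 : g₁ 0 = 1 := hχ0
      have hg₂0 : g₂ 0 = 1 := hχ0
      have hg₁hom : ∀ s t, g₁ (s + t) = g₁ s * g₁ t := by
        intro s t
        show χ (s + t, 0) = χ (s, 0) * χ (t, 0)
        rw [show ((s + t : ℝ), (0:ℝ)) = ((s, (0:ℝ)) + (t, (0:ℝ))) from by simp, hχmul]
      have hg₂hom : ∀ s t, g₂ (s + t) = g₂ s * g₂ t := by
        intro s t
        show χ (0, s + t) = χ (0, s) * χ (0, t)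
        rw [show ((0:ℝ), (s + t : ℝ)) = (((0:ℝ), s) + ((0:ℝ), t)) from by simp, hχmul]
      set l₁ : ℂ := deriv g₁ 0 with hl₁def
      set l₂ : ℂ := deriv g₂ 0 with hl₂def
      have hg₁val : ∀ t, g₁ t = Complex.exp (l₁ * t) := hom_exp g₁ hg₁diff hg₁0 hg₁hom
      have hg₂val : ∀ t, g₂ t = Complex.exp (l₂ * t) := hom_exp g₂ hg₂diff hg₂0 hg₂hom
      have hl₁re : l₁.re = 0 :=
        re_eq_zero_of_bounded l₁ (M / ‖E x₀ i₀‖)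
          (fun t => by rw [← hg₁val t]; exact hχbd (t, 0))
      have hl₂re : l₂.re = 0 :=
        re_eq_zero_of_bounded l₂ (M / ‖E x₀ i₀‖)
          (fun t => by rw [← hg₂val t]; exact hχbd (0, t))
      set k₁ : ℝ := -l₁.im with hk₁def
      set k₂ : ℝ := -l₂.im with hk₂def
      have hl₁ : l₁ = -((k₁:ℂ) * Complex.I) := by
        apply Complex.ext <;> simp [hl₁re, hk₁def]
      have hl₂ : l₂ = -((k₂:ℂ) * Complex.I) := by
        apply Complex.ext <;> simp [hl₂re, hk₂def]
      set kp : V3 := ![k₁, k₂, 0] with hkpdef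
      have ekp0 : kp 0 = k₁ := rfl
      have ekp1 : kp 1 = k₂ := rfl
      have ekp2 : kp 2 = 0 := rfl
      set z : ℝ → V3 := fun t => ![0, 0, t] with hzdef
      set f : Fin 3 → ℝ → ℂ := fun i t => E (z t) i with hfdef
      have hsub2 : ∀ x : V3, x - ![x 0, x 1, (0:ℝ)] = z (x 2) := by
        intro x
        funext j
        fin_cases j <;> simp [hzdef]
      have hχval : ∀ p q : ℝ, χ (p, q) = Complex.exp (l₁ * p + l₂ * q) := by
        intro p q
        rw [show ((p, q) : ℝ × ℝ) = ((p, (0:ℝ)) + ((0:ℝ), q)) from by simp, hχmul]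
        show g₁ p * g₂ q = _
        rw [hg₁val, hg₂val, ← Complex.exp_add]
      have hphχ : ∀ x : V3, χ (x 0, x 1) * ph kp x = 1 := by
        intro x
        rw [hχval, ph, ← Complex.exp_add]
        rw [show (l₁ * (x 0) + l₂ * (x 1) + Complex.I * ((∑ j, kp j * x j : ℝ):ℂ)) = 0 from ?_]
        · exact Complex.exp_zero
        rw [Fin.sum_univ_three, ekp0, ekp1, ekp2, hl₁, hl₂]
        push_cast
        ring
      have hrep : ∀ (x : V3) (i : Fin 3), E x i = ph kp x * f i (x 2) := by
        intro x i
        have h := congrFun (hχ x (x 0, x 1)) i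
        dsimp only at h
        rw [hsub2 x] at h
        rw [show f i (x 2) = χ (x 0, x 1) * E x i from h]
        linear_combination (-(E x i)) * hphχ x
      have hfbd : ∀ (i : Fin 3) (t : ℝ), ‖f i t‖ ≤ M := fun i t => hM (z t) i
      have hfc : ∀ i : Fin 3, ContDiff ℝ ((⊤:ℕ∞) : WithTop ℕ∞) (f i) := by
        intro i
        apply ((hsmooth i).of_le (by simp)).comp
        apply contDiff_pi.mpr
        intro j
        fin_cases j
        · exact contDiff_const
        · exact contDiff_const
        · exact contDiff_id
      have hfc' : ∀ i : Fin 3, ContDiff ℝ ((⊤:ℕ∞) : WithTop ℕ∞) (deriv (f i)) :=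
        fun i => (contDiff_infty_iff_deriv.mp (hfc i)).2
      have hf1 : ∀ (i : Fin 3) (t : ℝ), HasDerivAt (f i) (deriv (f i) t) t :=
        fun i t => ((contDiff_infty_iff_deriv.mp (hfc i)).1 t).hasDerivAt
      have hf2 : ∀ (i : Fin 3) (t : ℝ), HasDerivAt (deriv (f i)) (deriv (deriv (f i)) t) t :=
        fun i t => ((contDiff_infty_iff_deriv.mp (hfc' i)).1 t).hasDerivAt
      have hEfun : ∀ i : Fin 3, (fun y => E y i) = fun y => ph kp y * f i (y 2) :=
        fun i => funext fun y => hrep y i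
      have hph_z : ∀ t : ℝ, ph kp (z t) = 1 := by
        intro t
        rw [ph, Fin.sum_univ_three, ekp0, ekp1, ekp2,
          show z t 0 = 0 from rfl, show z t 1 = 0 from rfl]
        norm_num
      have hphkp : ∀ x : V3, ph kp x = Complex.exp (Complex.I * ((k₁ * x 0 + k₂ * x 1 : ℝ) : ℂ)) := by
        intro x
        rw [ph, Fin.sum_univ_three, ekp0, ekp1, ekp2]
        norm_num
      set β : ℝ := (ω/c)^2 - k₁^2 - k₂^2 with hβdef
      -- first-level pd as functions
      have h0a : ∀ i : Fin 3, pd 0 (fun y => ph kp y * f i (y 2))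
          = fun y => ph kp y * (Complex.I * (k₁:ℂ) * f i (y 2)) := by
        intro i
        funext y
        have h := pd_term_ne2 kp (f i) (deriv (f i)) (hf1 i) 0 (by decide) y
        rw [h, ekp0]
        ring
      have h1a : ∀ i : Fin 3, pd 1 (fun y => ph kp y * f i (y 2))
          = fun y => ph kp y * (Complex.I * (k₂:ℂ) * f i (y 2)) := by
        intro i
        funext y
        have h := pd_term_ne2 kp (f i) (deriv (f i)) (hf1 i) 1 (by decide) y
        rw [h, ekp1]
        ring
      have h2a : ∀ i : Fin 3, pd 2 (fun y => ph kp y * f i (y 2))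
          = fun y => ph kp y * deriv (f i) (y 2) := by
        intro i
        funext y
        have h := pd_term_2 kp (f i) (deriv (f i)) (hf1 i) y
        rw [h, ekp2]
        push_cast
        ring
      have key : ∀ (i : Fin 3) (t : ℝ), deriv (deriv (f i)) t = -((β:ℝ) : ℂ) * f i t := by
        intro i t
        have hl := hlap (z t) i
        rw [hEfun i, lap, Fin.sum_univ_three, h0a i, h1a i, h2a i] at hl
        have h0b : pd 0 (fun y => ph kp y * (Complex.I * (k₁:ℂ) * f i (y 2))) (z t)
            = ph kp (z t) * (Complex.I * (k₁:ℂ) * f i t) * (Complex.I * (k₁:ℂ)) := by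
          have h := pd_term_ne2 kp (fun s => Complex.I * (k₁:ℂ) * f i s)
            (fun s => Complex.I * (k₁:ℂ) * deriv (f i) s)
            (fun s => (hf1 i s).const_mul _) 0 (by decide) (z t)
          rw [h, ekp0, show z t 2 = t from rfl]
        have h1b : pd 1 (fun y => ph kp y * (Complex.I * (k₂:ℂ) * f i (y 2))) (z t)
            = ph kp (z t) * (Complex.I * (k₂:ℂ) * f i t) * (Complex.I * (k₂:ℂ)) := by
          have h := pd_term_ne2 kp (fun s => Complex.I * (k₂:ℂ) * f i s)
            (fun s => Complex.I * (k₂:ℂ) * deriv (f i) s)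
            (fun s => (hf1 i s).const_mul _) 1 (by decide) (z t)
          rw [h, ekp1, show z t 2 = t from rfl]
        have h2b : pd 2 (fun y => ph kp y * deriv (f i) (y 2)) (z t)
            = ph kp (z t) * deriv (deriv (f i)) t := by
          have h := pd_term_2 kp (deriv (f i)) (deriv (deriv (f i))) (hf2 i) (z t)
          rw [h, ekp2, show z t 2 = t from rfl]
          push_cast
          ring
        rw [h0b, h1b, h2b, hph_z t, show E (z t) i = f i t from rfl] at hl
        rw [hβdef]
        push_cast at hl ⊢
        linear_combination hl - ((k₁:ℂ)^2 + (k₂:ℂ)^2) * f i t * Complex.I_sq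
      have hdivf : ∀ t : ℝ, Complex.I * (k₁:ℂ) * f 0 t + Complex.I * (k₂:ℂ) * f 1 t
          + deriv (f 2) t = 0 := by
        intro t
        have hd := hdiv (z t)
        rw [Fin.sum_univ_three, hEfun 0, hEfun 1, hEfun 2] at hd
        have d0 : pd 0 (fun y => ph kp y * f 0 (y 2)) (z t) = ph kp (z t) * f 0 t * (Complex.I * (k₁:ℂ)) := by
          have h := pd_term_ne2 kp (f 0) (deriv (f 0)) (hf1 0) 0 (by decide) (z t)
          rw [h, ekp0, show z t 2 = t from rfl]
        have d1 : pd 1 (fun y => ph kp y * f 1 (y 2)) (z t) = ph kp (z t) * f 1 t * (Complex.I * (k₂:ℂ)) := by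
          have h := pd_term_ne2 kp (f 1) (deriv (f 1)) (hf1 1) 1 (by decide) (z t)
          rw [h, ekp1, show z t 2 = t from rfl]
        have d2 : pd 2 (fun y => ph kp y * f 2 (y 2)) (z t) = ph kp (z t) * deriv (f 2) t := by
          have h := pd_term_2 kp (f 2) (deriv (f 2)) (hf1 2) (z t)
          rw [h, ekp2, show z t 2 = t from rfl]
          push_cast
          ring
        rw [d0, d1, d2, hph_z t] at hd
        linear_combination hd
      rcases lt_trichotomy β 0 with hβ | hβ | hβ
      · -- β < 0 : contradiction with boundedness
        exfalso
        set μr : ℝ := Real.sqrt (-β) with hμrdef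
        have hμr : 0 < μr := Real.sqrt_pos.mpr (by linarith)
        have hμsq : ((μr:ℝ):ℂ)^2 = -((β:ℝ):ℂ) := by
          rw [← Complex.ofReal_pow, Real.sq_sqrt (by linarith : (0:ℝ) ≤ -β)]
          push_cast
          ring
        have hode := ode2 ((μr:ℝ):ℂ) (by exact_mod_cast hμr.ne') (f i₀) (deriv (f i₀)) (hf1 i₀)
          (fun t => by
            have h := hf2 i₀ t
            rw [key i₀ t, show -((β:ℝ):ℂ) * f i₀ t = ((μr:ℝ):ℂ)^2 * f i₀ t from by rw [hμsq]] at h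
            exact h)
        obtain ⟨A, B, hAB⟩ := hode
        have hA : A = 0 := expcomb_bounded μr M hμr A B
          (fun t => by rw [← hAB t]; exact hfbd i₀ t)
        have hB : B = 0 := expcomb_bounded μr M hμr B A
          (fun t => by
            have h := hfbd i₀ (-t)
            rw [hAB (-t)] at h
            simp only [Complex.ofReal_neg, mul_neg, neg_neg] at h
            rw [add_comm] at h
            exact h)
        apply hne
        rw [hrep x₀ i₀, hAB, hA, hB]
        simp
      · -- β = 0 : constant profile
        have hconst : ∀ (i : Fin 3) (t : ℝ), f i t = f i 0 :=
          fun i => ode0 (f i) (deriv (f i)) M (hfbd i) (hf1 i)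
            (fun t => by
              have h := hf2 i t
              rw [key i t, hβ] at h
              simpa using h)
        have hder2 : deriv (f 2) = fun _ => 0 := by
          rw [show f 2 = fun _ => f 2 0 from funext (hconst 2)]
          funext t
          exact deriv_const t _
        refine ⟨kp, (fun i => f i 0), 0, ?_, ?_, by simp, ?_⟩
        · rw [Fin.sum_univ_three, ekp0, ekp1, ekp2]
          rw [show k₁^2 + k₂^2 + (0:ℝ)^2 = (ω/c)^2 from by
            have : β = 0 := hβ
            rw [hβdef] at this
            nlinarith]
          exact Real.sqrt_sq hωc.le
        · have h := hdivf 0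
          rw [hder2] at h
          simp only [] at h
          rw [Fin.sum_univ_three, ekp0, ekp1, ekp2]
          push_cast
          linear_combination (-Complex.I) * h
            + ((k₁:ℂ) * f 0 0 + (k₂:ℂ) * f 1 0) * Complex.I_sq
        · intro x
          funext i
          rw [hrep x i, hconst i (x 2)]
          show ph kp x * f i 0 = f i 0 * ph kp x + 0 * _
          ring
      · -- β > 0 : plane-wave pair
        set κ : ℝ := Real.sqrt β with hκdef
        have hκ : 0 < κ := Real.sqrt_pos.mpr hβ
        have hκsq : κ^2 = β := Real.sq_sqrt hβ.le
        set μ : ℂ := Complex.I * (κ:ℂ) with hμdef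
        have hμne : μ ≠ 0 := mul_ne_zero Complex.I_ne_zero (by exact_mod_cast hκ.ne')
        have hμsq : μ^2 = -((β:ℝ):ℂ) := by
          rw [hμdef, mul_pow, Complex.I_sq, ← Complex.ofReal_pow, hκsq]
          ring
        choose A B hAB using fun i : Fin 3 => ode2 μ hμne (f i) (deriv (f i)) (hf1 i)
          (fun t => by
            have h := hf2 i t
            rw [key i t, show -((β:ℝ):ℂ) * f i t = μ^2 * f i t from by rw [hμsq]] at h
            exact h)
        have hf2deriv : ∀ t, deriv (f 2) t
            = A 2 * (μ * Complex.exp (μ * t)) + B 2 * (-μ * Complex.exp (-(μ * t))) := by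
          intro t
          have hfun : f 2 = fun s : ℝ => A 2 * Complex.exp (μ * s) + B 2 * Complex.exp (-(μ * s)) :=
            funext (hAB 2)
          have hD : HasDerivAt (fun s : ℝ => A 2 * Complex.exp (μ * s) + B 2 * Complex.exp (-(μ * s)))
              (A 2 * (μ * Complex.exp (μ * t)) + B 2 * (-μ * Complex.exp (-(μ * t)))) t := by
            apply HasDerivAt.add
            · exact (hasDerivAt_cexp_lin μ t).const_mul (A 2)
            · have h := (hasDerivAt_cexp_lin (-μ) t).const_mul (B 2)
              simpa [neg_mul] using h
          rw [hfun, hD.deriv]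
        set P : ℂ := Complex.I * (k₁:ℂ) * A 0 + Complex.I * (k₂:ℂ) * A 1 + μ * A 2 with hPdef
        set Q : ℂ := Complex.I * (k₁:ℂ) * B 0 + Complex.I * (k₂:ℂ) * B 1 - μ * B 2 with hQdef
        have hcomb : ∀ t : ℝ, P * Complex.exp (μ * t) + Q * Complex.exp (-(μ * t)) = 0 := by
          intro t
          have h := hdivf t
          rw [hAB 0 t, hAB 1 t, hf2deriv t] at h
          rw [hPdef, hQdef]
          linear_combination h
        have hPQ1 : P + Q = 0 := by
          have h := hcomb 0
          simpa using h
        have hexp₀ : Complex.exp (μ * ((π/(2*κ) : ℝ):ℂ)) = Complex.I := by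
          rw [show μ * ((π/(2*κ) : ℝ):ℂ) = ((π/2 : ℝ):ℂ) * Complex.I from by
            rw [hμdef]; push_cast; field_simp [hκ.ne']]
          rw [Complex.exp_mul_I, ← Complex.ofReal_cos, ← Complex.ofReal_sin,
            Real.cos_pi_div_two, Real.sin_pi_div_two]
          simp
        have hexp₀' : Complex.exp (-(μ * ((π/(2*κ) : ℝ):ℂ))) = -Complex.I := by
          rw [Complex.exp_neg, hexp₀, Complex.inv_I]
        have hPQ2 : P = Q := by
          have h := hcomb (π/(2*κ))
          rw [hexp₀, hexp₀'] at h
          have h2 : Complex.I * (P - Q) = 0 := by linear_combination h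
          rcases mul_eq_zero.mp h2 with h3 | h3
          · exact absurd h3 Complex.I_ne_zero
          · exact sub_eq_zero.mp h3
        have hP0 : P = 0 := by
          have : P + P = 0 := by rw [hPQ2] at hPQ1 ⊢; linear_combination hPQ1
          linear_combination this / 2
        have hQ0 : Q = 0 := by rw [← hPQ2]; exact hP0
        set kv : V3 := ![k₁, k₂, κ] with hkvdef
        have ekv0 : kv 0 = k₁ := rfl
        have ekv1 : kv 1 = k₂ := rfl
        have ekv2 : kv 2 = κ := rfl
        refine ⟨kv, A, B, ?_, ?_, ?_, ?_⟩
        · rw [Fin.sum_univ_three, ekv0, ekv1, ekv2]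
          rw [show k₁^2 + k₂^2 + κ^2 = (ω/c)^2 from by rw [hκsq, hβdef]; ring]
          exact Real.sqrt_sq hωc.le
        · rw [Fin.sum_univ_three, ekv0, ekv1, ekv2]
          have h : Complex.I * ((k₁:ℂ) * A 0 + (k₂:ℂ) * A 1 + (κ:ℂ) * A 2) = 0 := by
            rw [hPdef, hμdef] at hP0
            linear_combination hP0
          rcases mul_eq_zero.mp h with h3 | h3
          · exact absurd h3 Complex.I_ne_zero
          · exact h3
        · have e0 : (![kv 0, kv 1, -(kv 2)] : V3) 0 = k₁ := rfl
          have e1 : (![kv 0, kv 1, -(kv 2)] : V3) 1 = k₂ := rfl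
          have e2 : (![kv 0, kv 1, -(kv 2)] : V3) 2 = -κ := rfl
          rw [Fin.sum_univ_three, e0, e1, e2]
          have h : Complex.I * ((k₁:ℂ) * B 0 + (k₂:ℂ) * B 1 + ((-κ:ℝ):ℂ) * B 2) = 0 := by
            rw [hQdef, hμdef] at hQ0
            push_cast
            linear_combination hQ0
          rcases mul_eq_zero.mp h with h3 | h3
          · exact absurd h3 Complex.I_ne_zero
          · exact h3
        · intro x
          funext i
          rw [hrep x i, hAB i (x 2)]
          have h1 : Complex.I * ((∑ j, kv j * x j : ℝ):ℂ)
              = Complex.I * ((k₁ * x 0 + k₂ * x 1 : ℝ):ℂ) + μ * (x 2) := by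
            rw [Fin.sum_univ_three, ekv0, ekv1, ekv2, hμdef]
            push_cast
            ring
          have h2 : Complex.I * ((∑ j, (![kv 0, kv 1, -(kv 2)] : V3) j * x j : ℝ):ℂ)
              = Complex.I * ((k₁ * x 0 + k₂ * x 1 : ℝ):ℂ) + -(μ * (x 2)) := by
            rw [Fin.sum_univ_three,
              show (![kv 0, kv 1, -(kv 2)] : V3) 0 = k₁ from rfl,
              show (![kv 0, kv 1, -(kv 2)] : V3) 1 = k₂ from rfl,
              show (![kv 0, kv 1, -(kv 2)] : V3) 2 = -κ from rfl, hμdef]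
            push_cast
            ring
          rw [h1, h2, Complex.exp_add, Complex.exp_add, hphkp x]
          ring
  · -- backward direction
    rintro ⟨k, np, nm, h1, h2, h3, hE⟩
    set kt : V3 := ![k 0, k 1, -(k 2)] with hktdef
    have hkt0 : kt 0 = k 0 := rfl
    have hkt1 : kt 1 = k 1 := rfl
    have hkt2 : kt 2 = -(k 2) := rfl
    have hS0 : (0:ℝ) ≤ ∑ i, k i ^ 2 := by positivity
    have Ssq : (∑ i, k i ^ 2) = (ω/c)^2 := by
      rw [← h1, Real.sq_sqrt hS0]
    have hSc : ((k 0 : ℂ))^2 + (k 1 : ℂ)^2 + (k 2 : ℂ)^2 = ((ω:ℂ)/(c:ℂ))^2 := by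
      rw [Fin.sum_univ_three] at Ssq
      have h' : ((k 0:ℂ))^2+(k 1:ℂ)^2+(k 2:ℂ)^2 = (((k 0)^2+(k 1)^2+(k 2)^2 : ℝ) : ℂ) := by
        push_cast; ring
      rw [h', Ssq]
      push_cast
      ring
    have hEi : ∀ i : Fin 3, (fun y => E y i) = fun y => ph k y * np i + ph kt y * nm i := by
      intro i
      funext y
      rw [congrFun (hE y) i]
      show np i * ph k y + nm i * ph kt y = _
      ring
    refine ⟨?_, ?_, ?_⟩
    · -- translation symmetry
      refine ⟨fun a => Complex.exp (-(Complex.I * ((k 0 * a.1 + k 1 * a.2 : ℝ) : ℂ))), ?_⟩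
      intro x a
      funext i
      rw [congrFun (hE (x - ![a.1, a.2, 0])) i, congrFun (hE x) i]
      have hsub : ∀ (m : V3), (∑ j, m j * (x - ![a.1, a.2, 0]) j : ℝ)
          = (∑ j, m j * x j) - (m 0 * a.1 + m 1 * a.2) := by
        intro m
        simp only [Fin.sum_univ_three, Pi.sub_apply, Matrix.cons_val_zero, Matrix.cons_val_one,
          Matrix.head_cons]
        have : (![a.1, a.2, 0] : V3) 2 = 0 := rfl
        rw [this]
        ring
      rw [hsub k, hsub kt, hkt0, hkt1]
      push_cast
      rw [mul_sub, mul_sub, Complex.exp_sub, Complex.exp_sub]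
      rw [Complex.exp_neg]
      field_simp
    · -- Helmholtz
      intro x i
      rw [hEi i, lap]
      have hstep : ∀ j : Fin 3, pd j (fun y => ph k y * np i + ph kt y * nm i)
          = fun y => ph k y * (np i * (Complex.I * k j)) + ph kt y * (nm i * (Complex.I * kt j)) :=
        fun j => funext fun y => pd_const2 k kt (np i) (nm i) j y
      have hstep2 : ∀ j : Fin 3, pd j (pd j (fun y => ph k y * np i + ph kt y * nm i)) x
          = ph k x * ((np i * (Complex.I * k j)) * (Complex.I * k j))
            + ph kt x * ((nm i * (Complex.I * kt j)) * (Complex.I * kt j)) := by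
        intro j
        rw [hstep j, pd_const2]
      rw [Fin.sum_univ_three, hstep2 0, hstep2 1, hstep2 2, congrFun (hE x) i]
      show _ = -(((ω/c)^2 : ℝ) : ℂ) * (np i * ph k x + nm i * ph kt x)
      rw [hkt0, hkt1, hkt2]
      push_cast
      linear_combination (-(ph k x * np i + ph kt x * nm i) * hSc)
        + (ph k x * np i * ((k 0:ℂ)^2+(k 1:ℂ)^2+(k 2:ℂ)^2)
          + ph kt x * nm i * ((k 0:ℂ)^2+(k 1:ℂ)^2+(k 2:ℂ)^2)) * Complex.I_sq
    · -- divergence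
      intro x
      have hdiv : ∀ i : Fin 3, pd i (fun y => E y i) x
          = ph k x * (np i * (Complex.I * k i)) + ph kt x * (nm i * (Complex.I * kt i)) := by
        intro i
        rw [hEi i, pd_const2]
      rw [Fin.sum_univ_three, hdiv 0, hdiv 1, hdiv 2]
      rw [Fin.sum_univ_three] at h2 h3
      rw [hkt0, hkt1, hkt2] at h3 ⊢
      push_cast at h3 ⊢
      linear_combination (Complex.I * ph k x) * h2 + (Complex.I * ph kt x) * h3
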